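/- arXiv:2507.09828 — 2 statements merged into one kernel-verified Lean document; each statement's English description precedes it below -/
import Mathlib

section
/- For all c > 0, the Gaussian Q-function satisfies 1 - Φ(c) ≤ (1/c)·(1 - exp(-√(π/2)·c))·φ(c), where Φ and φ are the CDF and PDF of the standard normal distribution. -/
open Real MeasureTheory ProbabilityTheory Set

/-- Standard normal PDF. -/
noncomputable def stdPdf (c : ℝ) : ℝ := (Real.sqrt (2 * Real.pi))⁻¹ * Real.exp (-c ^ 2 / 2)

/-- Standard normal CDF. -/
noncomputable def stdCdf (c : ℝ) : ℝ := ∫ t in Set.Iic c, stdPdf t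

/-- τ(c) = c·Φ(c) + φ(c). -/
noncomputable def tau (c : ℝ) : ℝ := c * stdCdf c + stdPdf c

/-!
Substituting `t ↦ t + c` gives `(1 - Φ(c)) / φ(c) = ∫₀^∞ e^{-t²/2} e^{-tc} dt`, while, with
`a = √(π/2) = ∫₀^∞ e^{-t²/2} dt`, the right-hand side is `φ(c) ∫₀^a e^{-tc} dt`. The weight
`e^{-t²/2}` takes values in `[0, 1]` and has the same mass `a` as the indicator of `[0, a]`, so
moving that mass onto `[0, a]` can only increase the integral of the decreasing function `e^{-tc}`
(Steffensen's inequality).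
-/

theorem setIntegral_Ioi_mul_le_setIntegral_Ioc {w f : ℝ → ℝ} {b l : ℝ}
    (hw_nonneg : ∀ t ∈ Ioi b, 0 ≤ w t) (hw_le_one : ∀ t ∈ Ioi b, w t ≤ 1)
    (hw : IntegrableOn w (Ioi b)) (hl : ∫ t in Ioi b, w t = l)
    (hf : AntitoneOn f (Ici b)) (hwf : IntegrableOn (fun t ↦ w t * f t) (Ioi b)) :
    ∫ t in Ioi b, w t * f t ≤ ∫ t in Ioc b (b + l), f t := by
  have hl_nonneg : 0 ≤ l := hl ▸ setIntegral_nonneg measurableSet_Ioi hw_nonneg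
  set m := b + l
  have hbm : b ≤ m := le_add_of_nonneg_right hl_nonneg
  have hf_Ioc : IntegrableOn f (Ioc b m) :=
    ((hf.mono Icc_subset_Ici_self).integrableOn_isCompact isCompact_Icc).mono_set
      Ioc_subset_Icc_self
  have hf_ind : IntegrableOn ((Ioc b m).indicator f) (Ioi b) :=
    (hf_Ioc.integrable_indicator measurableSet_Ioc).integrableOn
  have hconst_ind : IntegrableOn ((Ioc b m).indicator fun _ ↦ f m) (Ioi b) :=
    ((integrableOn_const (by simp)).integrable_indicator measurableSet_Ioc).integrableOn
  -- pointwise, `(w - 1_{(b, m]}) * (f - f m) ≤ 0`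
  have hpointwise : ∀ t ∈ Ioi b, w t * f t - (Ioc b m).indicator f t
      ≤ w t * f m - (Ioc b m).indicator (fun _ ↦ f m) t := by
    intro t ht
    by_cases htm : t ≤ m
    · simp only [indicator_of_mem (show t ∈ Ioc b m from ⟨ht, htm⟩)]
      nlinarith [hw_le_one t ht, hf (mem_Ici.2 ht.le) (mem_Ici.2 hbm) htm]
    · simp only [indicator_of_notMem (fun h : t ∈ Ioc b m ↦ htm h.2), sub_zero]
      nlinarith [hw_nonneg t ht, hf (mem_Ici.2 hbm) (mem_Ici.2 ht.le) (not_le.1 htm).le]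
  have hmono : ∫ t in Ioi b, (w t * f t - (Ioc b m).indicator f t)
      ≤ ∫ t in Ioi b, (w t * f m - (Ioc b m).indicator (fun _ ↦ f m) t) :=
    setIntegral_mono_on (hwf.sub hf_ind) ((hw.mul_const (f m)).sub hconst_ind)
      measurableSet_Ioi hpointwise
  rw [integral_sub hwf hf_ind, integral_sub (hw.mul_const (f m)) hconst_ind,
    setIntegral_indicator measurableSet_Ioc, setIntegral_indicator measurableSet_Ioc,
    inter_eq_right.2 Ioc_subset_Ioi_self, integral_mul_const, hl, setIntegral_const,
    Real.volume_real_Ioc_of_le hbm] at hmono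
  simp only [m, add_sub_cancel_left, smul_eq_mul, sub_self] at hmono
  linarith

theorem stdPdf_eq_gaussianPDFReal : stdPdf = gaussianPDFReal 0 1 := by
  ext t
  simp [stdPdf, gaussianPDFReal]

theorem one_sub_stdCdf (c : ℝ) : 1 - stdCdf c = ∫ t in Ioi c, stdPdf t := by
  have h := integral_add_compl (measurableSet_Iic (a := c)) (integrable_gaussianPDFReal 0 1)
  rw [integral_gaussianPDFReal_eq_one 0 one_ne_zero, compl_Iic, ← stdPdf_eq_gaussianPDFReal] at h
  rw [stdCdf, ← h, add_sub_cancel_left]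

theorem stdPdf_add (t c : ℝ) :
    stdPdf (t + c) = stdPdf c * (exp (-(1 / 2) * t ^ 2) * exp (-t * c)) := by
  simp only [stdPdf, mul_assoc, ← exp_add]
  ring_nf

theorem setIntegral_Ioi_stdPdf (c : ℝ) :
    ∫ t in Ioi c, stdPdf t = stdPdf c * ∫ t in Ioi 0, exp (-(1 / 2) * t ^ 2) * exp (-t * c) := by
  have h := (measurePreserving_add_right volume c).setIntegral_preimage_emb
    (measurableEmbedding_addRight c) stdPdf (Ioi c)
  rw [preimage_add_const_Ioi, sub_self] at h
  simp only [← h, stdPdf_add, integral_const_mul]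

theorem setIntegral_Ioi_exp_neg_half_sq : ∫ t in Ioi 0, exp (-(1 / 2) * t ^ 2) = √(π / 2) := by
  rw [integral_gaussian_Ioi, show π / (1 / 2) = 2 ^ 2 * (π / 2) by ring, sqrt_mul (by positivity),
    sqrt_sq zero_le_two, mul_div_cancel_left₀ _ two_ne_zero]

theorem setIntegral_Ioc_exp_neg_mul {c : ℝ} (hc : c ≠ 0) {a : ℝ} (ha : 0 ≤ a) :
    ∫ t in Ioc 0 a, exp (-t * c) = (1 - exp (-a * c)) / c := by
  rw [← intervalIntegral.integral_of_le ha]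
  have h := intervalIntegral.integral_comp_mul_left exp (neg_ne_zero.2 hc) (a := 0) (b := a)
  simp only [neg_mul_comm, mul_comm (-c)] at h ⊢
  rw [h, integral_exp, zero_mul, exp_zero, smul_eq_mul]
  field_simp
  ring

theorem antitoneOn_exp_neg_mul {c : ℝ} (hc : 0 ≤ c) : AntitoneOn (fun t ↦ exp (-t * c)) (Ici 0) :=
  fun _ _ _ _ hst ↦ exp_le_exp.2 (by nlinarith)

theorem integrableOn_exp_neg_half_sq_mul_exp_neg_mul {c : ℝ} (hc : 0 ≤ c) :
    IntegrableOn (fun t ↦ exp (-(1 / 2) * t ^ 2) * exp (-t * c)) (Ioi 0) := by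
  refine ((integrable_exp_neg_mul_sq (by norm_num : (0 : ℝ) < 1 / 2)).integrableOn).mono'
    (by fun_prop) (ae_restrict_of_forall_mem measurableSet_Ioi fun t (ht : 0 < t) ↦ ?_)
  rw [norm_of_nonneg (by positivity)]
  exact mul_le_of_le_one_right (exp_nonneg _) (exp_le_one_iff.2 (by nlinarith))

theorem q_function_upper_bound (c : ℝ) (hc : 0 < c) :
    1 - stdCdf c ≤ (1 / c) * (1 - Real.exp (-Real.sqrt (Real.pi / 2) * c)) * stdPdf c := by
  have hsteffensen := setIntegral_Ioi_mul_le_setIntegral_Ioc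
    (fun t _ ↦ exp_nonneg _) (fun t _ ↦ exp_le_one_iff.2 (by nlinarith [sq_nonneg t]))
    (integrable_exp_neg_mul_sq (by norm_num : (0 : ℝ) < 1 / 2)).integrableOn
    setIntegral_Ioi_exp_neg_half_sq (antitoneOn_exp_neg_mul hc.le)
    (integrableOn_exp_neg_half_sq_mul_exp_neg_mul hc.le)
  rw [zero_add, setIntegral_Ioc_exp_neg_mul hc.ne' (sqrt_nonneg _)] at hsteffensen
  calc 1 - stdCdf c
      = stdPdf c * ∫ t in Ioi 0, exp (-(1 / 2) * t ^ 2) * exp (-t * c) := by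
        rw [one_sub_stdCdf, setIntegral_Ioi_stdPdf]
    _ ≤ stdPdf c * ((1 - exp (-√(π / 2) * c)) / c) := by
        gcongr
        rw [stdPdf]
        positivity
    _ = (1 / c) * (1 - exp (-√(π / 2) * c)) * stdPdf c := by ring
end

section
/- Let τ(c) = c·Φ(c) + φ(c). Suppose μ, μ' ∈ ℝ, s, s' > 0, b ∈ ℝ with μ' ≥ b and s·τ((μ−b)/s) ≥ s'·τ((μ'−b)/s') (i.e., the EI at (μ,s) dominates EI at (μ',s')) and μ < b. Then |μ − b| ≤ √(2·log(s/s')) · s, provided s ≥ s'. -/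
open Real MeasureTheory ProbabilityTheory Set

/-!
Since `τ' = Φ ≥ 0`, `τ` is monotone, so `μ' ≥ b` gives `s' τ(0) ≤ s' τ((μ' - b)/s')`. For
`c = (μ - b)/s < 0` the term `c Φ(c)` is negative, so `s τ(c) ≤ s φ(c) = s τ(0) e^{-c²/2}`.
Chaining through the dominance hypothesis yields `s' ≤ s e^{-c²/2}`, i.e. `c² ≤ 2 log (s/s')`.
-/

lemma stdPdf_pos (c : ℝ) : 0 < stdPdf c := by
  unfold stdPdf
  positivity

lemma continuous_stdPdf : Continuous stdPdf := by
  unfold stdPdf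
  fun_prop

lemma integrable_stdPdf : Integrable stdPdf := by
  have h : stdPdf = fun c => (√(2 * π))⁻¹ * exp (-(1 / 2) * c ^ 2) := by
    ext c
    simp only [stdPdf]
    ring_nf
  rw [h]
  exact (integrable_exp_neg_mul_sq (by norm_num)).const_mul _

lemma stdPdf_eq_stdPdf_zero_mul_exp (c : ℝ) : stdPdf c = stdPdf 0 * exp (-c ^ 2 / 2) := by
  simp [stdPdf]

lemma stdCdf_nonneg (c : ℝ) : 0 ≤ stdCdf c :=
  setIntegral_nonneg measurableSet_Iic fun t _ => (stdPdf_pos t).le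

lemma stdCdf_eq_stdCdf_zero_add_integral (x : ℝ) :
    stdCdf x = stdCdf 0 + ∫ t in (0 : ℝ)..x, stdPdf t := by
  rw [← intervalIntegral.integral_Iic_sub_Iic integrable_stdPdf.integrableOn
    integrable_stdPdf.integrableOn]
  simp only [stdCdf]
  ring

lemma hasDerivAt_stdCdf (c : ℝ) : HasDerivAt stdCdf (stdPdf c) c := by
  have h := (intervalIntegral.integral_hasDerivAt_right
    (integrable_stdPdf.intervalIntegrable (a := 0) (b := c))
    continuous_stdPdf.aestronglyMeasurable.stronglyMeasurableAtFilter
    continuous_stdPdf.continuousAt).const_add (stdCdf 0)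
  simpa only [← stdCdf_eq_stdCdf_zero_add_integral] using h

lemma hasDerivAt_stdPdf (c : ℝ) : HasDerivAt stdPdf (-c * stdPdf c) c :=
  ((((hasDerivAt_pow 2 c).fun_neg.div_const 2).exp).const_mul (√(2 * π))⁻¹).congr_deriv
    (by simp only [stdPdf]; ring)

lemma hasDerivAt_tau (c : ℝ) : HasDerivAt tau (stdCdf c) c :=
  (((hasDerivAt_id' c).mul (hasDerivAt_stdCdf c)).add (hasDerivAt_stdPdf c)).congr_deriv
    (by ring)

lemma monotone_tau : Monotone tau :=
  monotone_of_hasDerivAt_nonneg hasDerivAt_tau stdCdf_nonneg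

lemma tau_zero : tau 0 = stdPdf 0 := by
  simp [tau]

lemma tau_le_stdPdf {c : ℝ} (hc : c ≤ 0) : tau c ≤ stdPdf c := by
  have : c * stdCdf c ≤ 0 := mul_nonpos_of_nonpos_of_nonneg hc (stdCdf_nonneg c)
  unfold tau
  linarith

lemma sq_le_two_mul_log_div_of_mul_stdPdf_le {s s' c : ℝ} (hs' : 0 < s')
    (h : s' * stdPdf 0 ≤ s * stdPdf c) : c ^ 2 ≤ 2 * log (s / s') := by
  have hexp : s' ≤ s * exp (-c ^ 2 / 2) := by
    rw [stdPdf_eq_stdPdf_zero_mul_exp c, ← mul_assoc, mul_right_comm] at h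
    exact le_of_mul_le_mul_right h (stdPdf_pos 0)
  have hs : 0 < s := pos_of_mul_pos_left (hs'.trans_le hexp) (exp_pos _).le
  have : exp (c ^ 2 / 2) ≤ s / s' := by
    have := mul_le_mul_of_nonneg_right hexp (exp_pos (c ^ 2 / 2)).le
    rw [mul_assoc, ← exp_add, neg_div, neg_add_cancel, exp_zero, mul_one] at this
    rwa [le_div_iff₀ hs', mul_comm]
  linarith [(le_log_iff_exp_le (div_pos hs hs')).2 this]

theorem ei_mean_gap_bound_general (μ μ' s s' b : ℝ)
    (hs : 0 < s) (hs' : 0 < s') (hμ' : μ' ≥ b)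
    (hdom : s * tau ((μ - b) / s) ≥ s' * tau ((μ' - b) / s'))
    (hμ : μ < b) :
    |μ - b| ≤ Real.sqrt (2 * Real.log (s / s')) * s := by
  set c := (μ - b) / s
  have hc : c ≤ 0 := div_nonpos_of_nonpos_of_nonneg (by linarith) hs.le
  have hchain : s' * stdPdf 0 ≤ s * stdPdf c :=
    calc s' * stdPdf 0 = s' * tau 0 := by rw [tau_zero]
      _ ≤ s' * tau ((μ' - b) / s') :=
        mul_le_mul_of_nonneg_left (monotone_tau (div_nonneg (by linarith) hs'.le)) hs'.le
      _ ≤ s * tau c := hdom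
      _ ≤ s * stdPdf c := mul_le_mul_of_nonneg_left (tau_le_stdPdf hc) hs.le
  have habs : |c| ≤ √(2 * log (s / s')) := by
    rw [← sqrt_sq_eq_abs]
    exact sqrt_le_sqrt (sq_le_two_mul_log_div_of_mul_stdPdf_le hs' hchain)
  calc |μ - b| = |c| * s := by rw [abs_div, abs_of_pos hs, div_mul_cancel₀ _ hs.ne']
    _ ≤ √(2 * log (s / s')) * s := mul_le_mul_of_nonneg_right habs hs.le

theorem ei_mean_gap_bound (μ μ' s s' b : ℝ)
    (hs : 0 < s) (hs' : 0 < s') (hμ' : μ' ≥ b)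
    (hdom : s * tau ((μ - b) / s) ≥ s' * tau ((μ' - b) / s'))
    (hμ : μ < b) (hss' : s ≥ s') :
    |μ - b| ≤ Real.sqrt (2 * Real.log (s / s')) * s :=
  ei_mean_gap_bound_general μ μ' s s' b hs hs' hμ' hdom hμ
end
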